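/- Let p ≥ 1, q ≥ 1, and n ≥ 1 be integers, and let m be an integer with m ≤ -(2n-1)q. Let Γ = ⟨a, b, t ∣ t a^p t⁻¹ = b⁻¹ a^p, t b^{-q} a⁻¹ t⁻¹ = b^{-q}, t^m [b^q, a^p]^n = 1⟩, with commutator convention [x,y] = x⁻¹y⁻¹xy and integer powers interpreted as zpow. Then the identity element 1 of Γ lies in ⟨⟨t⟩⟩⁺; consequently, if t ≠ 1 in Γ, then t is a generalized torsion element of Γ. -/

import Mathlib

/-!
Write `A = a^p`, `B = b^q` and `λ = [B, A]`. The first two relations say that `A` conjugates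
`t` to `bt` and `B` conjugates `t` to `ta`, so `B⁻¹AB` conjugates `t` to `bt`; hence `λ`
commutes with `t` and `λ⁻¹t^q = A⁻¹XA·B` with `X = (bt)^q b^{-q}`, a product of `q` conjugates
of `t`. The surgery relation `λⁿ = t^{-m}` with `-m ≥ (2n-1)q` produces a product `W` of
conjugates of `t` (possibly empty) with `t^qW = λ`. Then `B = A(Bt^q·W)A⁻¹` is such a product
too, so `W⁻¹ = λ⁻¹t^q = A⁻¹XA·B` lies in `⟨⟨t⟩⟩⁺`, and `1 = W⁻¹W ∈ ⟨⟨t⟩⟩⁺`.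
-/

/-- `g` is a generalized torsion element of `G`: `g ≠ 1` and some non-empty
finite product of conjugates of `g` equals `1`. -/
def IsGeneralizedTorsion {G : Type*} [Group G] (g : G) : Prop :=
  g ≠ 1 ∧ ∃ xs : List G, xs ≠ [] ∧ (xs.map (fun x => x * g * x⁻¹)).prod = 1

/-- `⟨⟨g⟩⟩⁺`: the set of all non-empty finite products of conjugates of `g`. -/
def conjProdSet {G : Type*} [Group G] (g : G) : Set G :=
  {a | ∃ xs : List G, xs ≠ [] ∧ (xs.map (fun x => x * g * x⁻¹)).prod = a}

/-- The commutator, with the convention `[x,y] = x⁻¹y⁻¹xy`. -/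
def com {G : Type*} [Group G] (x y : G) : G := x⁻¹ * y⁻¹ * x * y

/-- Relators of the presentation
`⟨a, b, t ∣ t a^p t⁻¹ = b⁻¹ a^p, t b^{-q} a⁻¹ t⁻¹ = b^{-q}, t^m [b^q,a^p]^n = 1⟩`
of `π₁(K(m/n))` for `m/n`-surgery on the genus one two-bridge knot
`K = C[2p, 2q]`; generator `0` is `a`, generator `1` is `b`, generator `2` is
`t` (the meridian), and `[b^q, a^p]` is the longitude. -/
def surgeryRels (p q m n : ℤ) : Set (FreeGroup (Fin 3)) :=
  { FreeGroup.of 2 * FreeGroup.of 0 ^ p * (FreeGroup.of 2)⁻¹ *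
      ((FreeGroup.of 1)⁻¹ * FreeGroup.of 0 ^ p)⁻¹,
    FreeGroup.of 2 * FreeGroup.of 1 ^ (-q) * (FreeGroup.of 0)⁻¹ *
      (FreeGroup.of 2)⁻¹ * (FreeGroup.of 1 ^ (-q))⁻¹,
    FreeGroup.of 2 ^ m *
      ((FreeGroup.of 1 ^ q)⁻¹ * (FreeGroup.of 0 ^ p)⁻¹ *
        FreeGroup.of 1 ^ q * FreeGroup.of 0 ^ p) ^ n }

section ConjProd

variable {G : Type*} [Group G] {g u v x y : G}

theorem conj_list_prod_map_conj (g u : G) (xs : List G) :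
    u * (xs.map (fun x => x * g * x⁻¹)).prod * u⁻¹ =
      ((xs.map (u * ·)).map (fun x => x * g * x⁻¹)).prod := by
  induction xs with
  | nil => simp
  | cons x xs ih =>
    simp only [List.map_cons, List.prod_cons, ← ih]
    group

/-- `⟨⟨g⟩⟩⁺ ∪ {1}` -/
def conjProdMonoid (g : G) : Submonoid G where
  carrier := {a | ∃ xs : List G, (xs.map (fun x => x * g * x⁻¹)).prod = a}
  mul_mem' := by
    rintro _ _ ⟨xs, rfl⟩ ⟨ys, rfl⟩
    exact ⟨xs ++ ys, by simp⟩
  one_mem' := ⟨[], rfl⟩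

theorem conj_mem_conjProdMonoid (g u : G) : u * g * u⁻¹ ∈ conjProdMonoid g :=
  ⟨[u], by simp⟩

theorem conjProdMonoid.conj_mem (hx : x ∈ conjProdMonoid g) (u : G) :
    u * x * u⁻¹ ∈ conjProdMonoid g := by
  obtain ⟨xs, rfl⟩ := hx
  exact ⟨_, (conj_list_prod_map_conj g u xs).symm⟩

theorem conj_mem_conjProdSet (g u : G) : u * g * u⁻¹ ∈ conjProdSet g :=
  ⟨[u], by simp, by simp⟩

theorem conjProdSet.conj_mem (hx : x ∈ conjProdSet g) (u : G) :
    u * x * u⁻¹ ∈ conjProdSet g := by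
  obtain ⟨xs, hne, rfl⟩ := hx
  exact ⟨_, by simpa using hne, (conj_list_prod_map_conj g u xs).symm⟩

theorem conjProdSet.mul_mem_right (hx : x ∈ conjProdSet g) (hy : y ∈ conjProdMonoid g) :
    x * y ∈ conjProdSet g := by
  obtain ⟨xs, hne, rfl⟩ := hx
  obtain ⟨ys, rfl⟩ := hy
  exact ⟨xs ++ ys, by simp [hne], by simp⟩

theorem conjProdSet_subset_conjProdMonoid : conjProdSet g ⊆ conjProdMonoid g :=
  fun _ ⟨xs, _, hxs⟩ => ⟨xs, hxs⟩

theorem pow_succ_mul_pow_succ (u v : G) (k : ℕ) :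
    u ^ (k + 1) * v ^ (k + 1) = u * v * (v⁻¹ * (u ^ k * v ^ k) * v) := by
  rw [pow_succ', pow_succ]
  group

theorem pow_mul_pow_mem_conjProdMonoid (h : u * v ∈ conjProdMonoid g) (k : ℕ) :
    u ^ k * v ^ k ∈ conjProdMonoid g := by
  induction k with
  | zero => simp only [pow_zero, mul_one]; exact one_mem _
  | succ k ih =>
    rw [pow_succ_mul_pow_succ]
    exact mul_mem h (by simpa using conjProdMonoid.conj_mem ih v⁻¹)

theorem pow_mul_pow_mem_conjProdSet (h : u * v ∈ conjProdSet g) {k : ℕ} (hk : k ≠ 0) :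
    u ^ k * v ^ k ∈ conjProdSet g := by
  obtain ⟨k, rfl⟩ := Nat.exists_eq_succ_of_ne_zero hk
  rw [pow_succ_mul_pow_succ]
  refine conjProdSet.mul_mem_right h ?_
  simpa using conjProdMonoid.conj_mem
    (pow_mul_pow_mem_conjProdMonoid (conjProdSet_subset_conjProdMonoid h) k) v⁻¹

end ConjProd

theorem Commute.eq_pow_mul_of_pow_succ_eq {G : Type*} [Group G] {x t : G} {q n e : ℕ}
    (hc : Commute x t) (h : x ^ (n + 1) = t ^ ((2 * n + 1) * q + e)) :
    x = t ^ q * ((x⁻¹ * t ^ (2 * q)) ^ n * t ^ e) := by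
  have hc' : Commute x⁻¹ t := hc.inv_left
  calc x = x⁻¹ ^ n * x ^ (n + 1) := by group
    _ = x⁻¹ ^ n * (t ^ q * (t ^ (2 * q)) ^ n * t ^ e) := by
      rw [h, ← pow_mul, ← pow_add, ← pow_add]; ring_nf
    _ = t ^ q * ((x⁻¹ * t ^ (2 * q)) ^ n * t ^ e) := by
      simp only [(hc'.pow_right _).mul_pow, ← mul_assoc, (hc'.pow_pow n q).eq]

section SurgeryRelations

variable {G : Type*} [Group G] {a b t A B : G}

theorem semiconjBy_inv_mul_mul (hA : SemiconjBy A t (b * t)) (hB : SemiconjBy B t (t * a))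
    (haA : Commute a A) (hbB : Commute b B) : SemiconjBy (B⁻¹ * A * B) t (b * t) := by
  have hAB : SemiconjBy (A * B) t (b * t * a) := (hA.mul_right haA.symm).mul_left hB
  have hB' : SemiconjBy B⁻¹ (b * t * a) (b * t) := by
    simpa only [mul_assoc] using hbB.symm.inv_symm_left.mul_right hB.inv_symm_left
  simpa only [mul_assoc] using hB'.mul_left hAB

theorem commute_com (hA : SemiconjBy A t (b * t)) (hB : SemiconjBy B t (t * a))
    (haA : Commute a A) (hbB : Commute b B) : Commute (com B A) t := by
  have h : com B A = (B⁻¹ * A * B)⁻¹ * A := by simp only [com]; group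
  rw [h]
  exact (semiconjBy_inv_mul_mul hA hB haA hbB).inv_symm_left.mul_left hA

theorem inv_com_mul_pow (hA : SemiconjBy A t (b * t)) (hB : SemiconjBy B t (t * a))
    (haA : Commute a A) (hbB : Commute b B) (k : ℕ) :
    (com B A)⁻¹ * t ^ k = A⁻¹ * (b * t) ^ k * (B⁻¹ * A * B) := by
  have h : (com B A)⁻¹ = A⁻¹ * (B⁻¹ * A * B) := by simp only [com]; group
  rw [h, mul_assoc, ((semiconjBy_inv_mul_mul hA hB haA hbB).pow_right k).eq, ← mul_assoc]

end SurgeryRelations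

theorem one_mem_conjProdSet_of_relations {G : Type*} [Group G] {a b t A : G} {q n e : ℕ}
    (hq : q ≠ 0) (haA : Commute a A) (h₁ : t * A * t⁻¹ = b⁻¹ * A)
    (h₂ : t * (b ^ q)⁻¹ * a⁻¹ * t⁻¹ = (b ^ q)⁻¹)
    (h₃ : com (b ^ q) A ^ (n + 1) = t ^ ((2 * n + 1) * q + e)) :
    (1 : G) ∈ conjProdSet t := by
  have hA : SemiconjBy A t (b * t) :=
    calc A * t = b * (b⁻¹ * A) * t := by group
      _ = b * t * A := by rw [← h₁]; group
  have hB : SemiconjBy (b ^ q) t (t * a) :=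
    calc b ^ q * t = ((b ^ q)⁻¹)⁻¹ * t := by rw [inv_inv]
      _ = t * a * b ^ q := by rw [← h₂]; group
  have hbB : Commute b (b ^ q) := Commute.self_pow b q
  set B := b ^ q
  set X := (b * t) ^ q * b⁻¹ ^ q
  have hX : X ∈ conjProdSet t :=
    pow_mul_pow_mem_conjProdSet (by simpa only [mul_assoc] using conj_mem_conjProdSet t b) hq
  have hY : A⁻¹ * X * A ∈ conjProdSet t := by simpa using conjProdSet.conj_mem hX A⁻¹
  have hY_eq : (com B A)⁻¹ * t ^ q = A⁻¹ * X * A * B := by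
    rw [inv_com_mul_pow hA hB haA hbB]; simp only [X, B, inv_pow]; group
  have hZ : B * t ^ q ∈ conjProdMonoid t := by
    refine pow_mul_pow_mem_conjProdMonoid ?_ q
    simpa only [hA.eq, mul_inv_cancel_right] using conj_mem_conjProdMonoid t A
  set W := ((com B A)⁻¹ * t ^ (2 * q)) ^ n * t ^ e
  have hW : W ∈ conjProdMonoid t := by
    refine mul_mem (pow_mem ?_ n) (pow_mem (by simpa using conj_mem_conjProdMonoid t 1) e)
    rw [two_mul, pow_add, ← mul_assoc, hY_eq, mul_assoc _ B]
    exact mul_mem (conjProdSet_subset_conjProdMonoid hY) hZ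
  have hcom : com B A = t ^ q * W := (commute_com hA hB haA hbB).eq_pow_mul_of_pow_succ_eq h₃
  have hBmem : B ∈ conjProdMonoid t := by
    have h : B = A * (B * t ^ q * W) * A⁻¹ := by
      rw [mul_assoc B, ← hcom]; simp only [com]; group
    rw [h]
    exact conjProdMonoid.conj_mem (mul_mem hZ hW) A
  have hW_inv : W⁻¹ ∈ conjProdSet t := by
    have h : W⁻¹ = A⁻¹ * X * A * B := by
      rw [← hY_eq, hcom]; group
    rw [h]
    exact conjProdSet.mul_mem_right hY hBmem
  simpa using conjProdSet.mul_mem_right hW_inv hW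

theorem genus_one_two_bridge_surgery_negative_slope_general (p q m n : ℤ)
    (hq : 1 ≤ q) (hn : 1 ≤ n) (hm : m ≤ -((2 * n - 1) * q)) :
    letI t : PresentedGroup (surgeryRels p q m n) := PresentedGroup.of 2
    (1 : PresentedGroup (surgeryRels p q m n)) ∈ conjProdSet t ∧
    (t ≠ 1 → IsGeneralizedTorsion t) := by
  have h₁ := PresentedGroup.mk_eq_mk_of_mul_inv_mem
    (rels := surgeryRels p q m n) (Set.mem_insert _ _)
  have h₂ := PresentedGroup.mk_eq_mk_of_mul_inv_mem
    (rels := surgeryRels p q m n) (Set.mem_insert_of_mem _ (Set.mem_insert _ _))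
  have h₃ := PresentedGroup.one_of_mem
    (rels := surgeryRels p q m n) (Set.mem_insert_of_mem _ (Set.mem_insert_of_mem _ rfl))
  lift q to ℕ using by omega
  obtain ⟨n, rfl⟩ : ∃ k : ℕ, n = ((k + 1 : ℕ) : ℤ) := ⟨(n - 1).toNat, by omega⟩
  obtain ⟨e, rfl⟩ : ∃ e : ℕ, m = -(((2 * n + 1) * q + e : ℕ) : ℤ) := by
    refine ⟨(-m - (2 * n + 1) * q).toNat, ?_⟩
    push_cast at hm ⊢
    rw [Int.toNat_of_nonneg (by linarith)]
    ring
  simp only [map_mul, map_zpow, map_inv, zpow_neg, zpow_natCast] at h₁ h₂ h₃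
  have hone := one_mem_conjProdSet_of_relations (by omega) (Commute.self_zpow _ p) h₁ h₂
    (inv_mul_eq_one.mp h₃).symm
  exact ⟨hone, fun ht => ⟨ht, hone⟩⟩

/-- Theorem 1.5(2): for `p ≥ 1`, `q ≥ 1`, `n ≥ 1` and `m ≤ -(2n-1)q`, in
`Γ = π₁(K(m/n))` for `K = C[2p, 2q]` the identity lies in `⟨⟨t⟩⟩⁺`;
consequently, if `t ≠ 1` then the meridian `t` is a generalized torsion
element of `Γ`. -/
theorem genus_one_two_bridge_surgery_negative_slope (p q m n : ℤ)
    (hp : 1 ≤ p) (hq : 1 ≤ q) (hn : 1 ≤ n) (hm : m ≤ -((2 * n - 1) * q)) :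
    letI t : PresentedGroup (surgeryRels p q m n) := PresentedGroup.of 2
    (1 : PresentedGroup (surgeryRels p q m n)) ∈ conjProdSet t ∧
    (t ≠ 1 → IsGeneralizedTorsion t) :=
  genus_one_two_bridge_surgery_negative_slope_general p q m n hq hn hm
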